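/- arXiv:math/0502061 — 3 statements merged into one kernel-verified Lean document; each statement's English description precedes it below -/
import Mathlib

section
/- Let $\Delta > 1$ and $\nu \ge 1$ be integers, $R_0(t;\nu) = \frac{(\nu\Delta)!}{(\nu\Delta-\nu)!}\prod_{\kappa=\nu+1}^{\nu\Delta}(t-\kappa)\prod_{\kappa=0}^{\nu\Delta}(t+\kappa)^{-1}$, and $\alpha^*_{\nu,k} = (-1)^{\nu+\nu\Delta+k}\binom{\nu\Delta}{k}^3\binom{\nu\Delta+k}{\nu\Delta-\nu}^3$. Then for each $k \in \{0,\ldots,\nu\Delta\}$, $\lim_{t\to -k}\frac{d}{dt}\big(R_0(t;\nu)^3(t+k)^3\big) = 3\,\alpha^*_{\nu,k}\Big(-\sum_{\kappa=\nu+k+1}^{\nu\Delta+k}\kappa^{-1} - \sum_{\kappa=1}^{\nu\Delta-k}\kappa^{-1} + \sum_{\kappa=1}^{k}\kappa^{-1}\Big)$. -/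
/-!
Off `t = -k`, `R₀(t) (t + k)` equals the function `g = regularPart` obtained by cancelling the
factor `t + k` of the denominator, and `g` is analytic at `-k`. Hence the derivative of
`R₀(t)³ (t + k)³ = g(t)³` tends to `(g³)'(-k) = 3 g(-k)³ (g'/g)(-k)`. Since `g` is a product of
linear factors and their inverses, `g(-k)` is a ratio of factorials, which is the product of the
two binomial coefficients, and `(g'/g)(-k)` is a sum of reciprocals, which reindexes to the
three harmonic-type sums.
-/

open Filter Finset Topology
open scoped Nat

namespace Finset

variable {M : Type*} [CommMonoid M]

@[to_additive]
theorem prod_Icc_add' {α : Type*} [AddCommMonoid α] [PartialOrder α] [IsOrderedCancelAddMonoid α]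
    [ExistsAddOfLE α] [LocallyFiniteOrder α] (f : α → M) (a b c : α) :
    ∏ x ∈ Icc a b, f (x + c) = ∏ x ∈ Icc (a + c) (b + c), f x := by
  rw [← map_add_right_Icc, prod_map]
  rfl

@[to_additive]
theorem prod_range_eq_prod_Icc_sub (f : ℕ → M) (n : ℕ) :
    ∏ x ∈ range n, f x = ∏ j ∈ Icc 1 n, f (n - j) := by
  refine prod_nbij' (n - ·) (n - ·) ?_ ?_ ?_ ?_ ?_ <;>
    simp only [mem_range, mem_Icc] <;> intro x hx
  all_goals first | omega | congr 1; omega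

@[to_additive]
theorem prod_range_succ_erase {k n : ℕ} (hk : k ≤ n) (f : ℕ → M) :
    ∏ x ∈ (range (n + 1)).erase k, f x = (∏ x ∈ range k, f x) * ∏ x ∈ Icc (k + 1) n, f x := by
  have hsplit : (range (n + 1)).erase k = range k ∪ Icc (k + 1) n := by
    ext x
    simp only [mem_erase, mem_range, mem_union, mem_Icc]
    omega
  have hdisj : Disjoint (range k) (Icc (k + 1) n) :=
    disjoint_left.2 fun x hx hx' => by simp only [mem_range, mem_Icc] at hx hx'; omega
  rw [hsplit, prod_union hdisj]

end Finset

section Reindexing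

variable {M : Type*} [CommMonoid M]

@[to_additive]
theorem prod_Icc_neg_sub_natCast (f : ℝ → M) (a b k : ℕ) :
    ∏ x ∈ Icc (a + 1) b, f (-k - x) = ∏ j ∈ Icc (a + k + 1) (b + k), f (-j) := by
  rw [show a + k + 1 = a + 1 + k by ring, ← prod_Icc_add']
  refine prod_congr rfl fun x _ => ?_
  push_cast
  ring_nf

@[to_additive]
theorem prod_range_succ_erase_natCast_sub {k n : ℕ} (hk : k ≤ n) (f : ℝ → M) :
    ∏ x ∈ (range (n + 1)).erase k, f (x - k) =
      (∏ j ∈ Icc 1 k, f (-j)) * ∏ j ∈ Icc 1 (n - k), f j := by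
  rw [prod_range_succ_erase hk, prod_range_eq_prod_Icc_sub,
    show k + 1 = 1 + k by ring, show n = n - k + k by omega, ← prod_Icc_add', Nat.add_sub_cancel]
  congr 1
  · refine prod_congr rfl fun j hj => ?_
    rw [Nat.cast_sub (mem_Icc.1 hj).2]
    ring_nf
  · refine prod_congr rfl fun j _ => ?_
    push_cast
    ring_nf

end Reindexing

section Factorial

variable {K : Type*} [Field K] [CharZero K]

theorem prod_Icc_natCast_eq_factorial_div {a b : ℕ} (h : a ≤ b) :
    ∏ x ∈ Icc (a + 1) b, (x : K) = b ! / a ! := by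
  have hnat : a ! * ∏ x ∈ Icc (a + 1) b, x = b ! := by
    rw [← Ico_add_one_right_eq_Icc, ← prod_Ico_id_eq_factorial, ← prod_Ico_id_eq_factorial,
      prod_Ico_consecutive _ (by omega) (by omega)]
  rw [eq_div_iff (Nat.cast_ne_zero.2 a.factorial_ne_zero), ← hnat]
  push_cast
  ring

theorem prod_Icc_one_natCast (n : ℕ) : ∏ x ∈ Icc 1 n, (x : K) = n ! := by
  simpa using prod_Icc_natCast_eq_factorial_div (K := K) (Nat.zero_le n)

end Factorial

section LogDeriv

variable {𝕜 : Type*} [NontriviallyNormedField 𝕜] {ι : Type*}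

theorem logDeriv_prod_add_const (s : Finset ι) (a : ι → 𝕜) {x : 𝕜} (hx : ∀ i ∈ s, x + a i ≠ 0) :
    logDeriv (fun t => ∏ i ∈ s, (t + a i)) x = ∑ i ∈ s, (x + a i)⁻¹ := by
  rw [logDeriv_prod hx fun i _ => by fun_prop]
  refine sum_congr rfl fun i _ => ?_
  rw [logDeriv_apply, deriv_add_const, deriv_id'', one_div]

theorem logDeriv_prod_sub_const (s : Finset ι) (a : ι → 𝕜) {x : 𝕜} (hx : ∀ i ∈ s, x ≠ a i) :
    logDeriv (fun t => ∏ i ∈ s, (t - a i)) x = ∑ i ∈ s, (x - a i)⁻¹ := by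
  have hx' : ∀ i ∈ s, x + (-a) i ≠ 0 := fun i hi => by
    rw [Pi.neg_apply, ← sub_eq_add_neg]
    exact sub_ne_zero.2 (hx i hi)
  simpa only [Pi.neg_apply, ← sub_eq_add_neg] using logDeriv_prod_add_const s (-a) hx'

theorem deriv_fun_pow_eq_mul_logDeriv {f : 𝕜 → 𝕜} {x : 𝕜} (hf : DifferentiableAt 𝕜 f x)
    (hx : f x ≠ 0) (n : ℕ) : deriv (fun t => f t ^ n) x = n * f x ^ n * logDeriv f x := by
  rw [mul_comm (n : 𝕜), mul_assoc, ← logDeriv_fun_pow hf, logDeriv_apply,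
    mul_div_cancel₀ _ (pow_ne_zero n hx)]

theorem tendsto_deriv_nhdsNE_of_eventuallyEq {E : Type*} [NormedAddCommGroup E] [NormedSpace 𝕜 E]
    [CompleteSpace E] {f g : 𝕜 → E} {x : 𝕜} (hfg : f =ᶠ[𝓝[≠] x] g) (hg : AnalyticAt 𝕜 g x) :
    Tendsto (deriv f) (𝓝[≠] x) (𝓝 (deriv g x)) :=
  (hg.deriv.continuousAt.tendsto.mono_left nhdsWithin_le_nhds).congr' hfg.nhdsNE_deriv.symm

end LogDeriv

/-- `R₀(t;ν) (t + k)` with the factor `t + k` cancelled, where `m` stands for `νΔ`. -/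
noncomputable def regularPart (m ν k : ℕ) (t : ℝ) : ℝ :=
  m ! / (m - ν)! * (∏ x ∈ Icc (ν + 1) m, (t - x)) / ∏ x ∈ (range (m + 1)).erase k, (t + x)

section RegularPart

variable {m ν k : ℕ}

theorem mul_add_eq_regularPart (hk : k ≤ m) {t : ℝ} (ht : t + k ≠ 0) :
    m ! / (m - ν)! * (∏ x ∈ Icc (ν + 1) m, (t - x)) * (∏ x ∈ range (m + 1), (t + x)⁻¹) * (t + k) =
      regularPart m ν k t := by
  rw [regularPart, prod_inv_distrib, ← mul_prod_erase _ _ (mem_range.2 (Nat.lt_succ_of_le hk)),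
    mul_inv, div_eq_mul_inv _ (∏ x ∈ (range (m + 1)).erase k, (t + x))]
  calc _ = m ! / (m - ν)! * (∏ x ∈ Icc (ν + 1) m, (t - x)) *
        (∏ x ∈ (range (m + 1)).erase k, (t + x))⁻¹ * ((t + k)⁻¹ * (t + k)) := by ring
    _ = _ := by rw [inv_mul_cancel₀ ht, mul_one]

theorem prod_erase_neg_add_ne_zero (m k : ℕ) :
    ∏ x ∈ (range (m + 1)).erase k, (-(k : ℝ) + x) ≠ 0 :=
  prod_ne_zero_iff.2 fun x hx h =>
    (ne_of_mem_erase hx) (by exact_mod_cast (neg_add_eq_zero.1 h).symm)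

theorem analyticAt_regularPart (m ν k : ℕ) : AnalyticAt ℝ (regularPart m ν k) (-k) :=
  AnalyticAt.div (by fun_prop) (by fun_prop) (prod_erase_neg_add_ne_zero m k)

theorem regularPart_neg (hν : ν ≤ m) (hk : k ≤ m) :
    regularPart m ν k (-k) = (-1) ^ (ν + m + k) * m.choose k * (m + k).choose (m - ν) := by
  have hnum : ∏ x ∈ Icc (ν + 1) m, (-(k : ℝ) - x) = (-1) ^ (m - ν) * ((m + k)! / (ν + k)!) := by
    rw [prod_Icc_neg_sub_natCast (fun y : ℝ => y) ν m k, prod_neg, Nat.card_Icc,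
      show m + k + 1 - (ν + k + 1) = m - ν by omega,
      prod_Icc_natCast_eq_factorial_div (by omega)]
  have hden : ∏ x ∈ (range (m + 1)).erase k, (-(k : ℝ) + x) = (-1) ^ k * k ! * (m - k)! := by
    simp_rw [neg_add_eq_sub]
    rw [prod_range_succ_erase_natCast_sub hk (fun y : ℝ => y), prod_neg, Nat.card_Icc,
      Nat.add_sub_cancel, prod_Icc_one_natCast, prod_Icc_one_natCast]
  have hsign : (-1 : ℝ) ^ (m - ν) = (-1) ^ (ν + m + k) * (-1) ^ k := by
    rw [← pow_add, show ν + m + k + k = m - ν + 2 * (ν + k) by omega, pow_add, pow_mul]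
    norm_num
  rw [regularPart, hnum, hden, hsign, Nat.cast_choose ℝ hk,
    Nat.cast_choose ℝ (by omega : m - ν ≤ m + k), show m + k - (m - ν) = ν + k by omega]
  field_simp

theorem logDeriv_regularPart_neg (hk : k ≤ m) :
    logDeriv (regularPart m ν k) (-k) =
      -(∑ x ∈ Icc (ν + k + 1) (m + k), (x : ℝ)⁻¹) - (∑ x ∈ Icc 1 (m - k), (x : ℝ)⁻¹) +
        ∑ x ∈ Icc 1 k, (x : ℝ)⁻¹ := by
  have hnum : ∀ x ∈ Icc (ν + 1) m, -(k : ℝ) ≠ x := fun x hx => by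
    have : (1 : ℝ) ≤ x := by exact_mod_cast (by simp only [mem_Icc] at hx; omega : 1 ≤ x)
    linarith
  have hden : ∀ x ∈ (range (m + 1)).erase k, -(k : ℝ) + x ≠ 0 :=
    prod_ne_zero_iff.1 (prod_erase_neg_add_ne_zero m k)
  have hC : (m ! / (m - ν)! : ℝ) ≠ 0 := by positivity
  unfold regularPart
  rw [logDeriv_div (f := fun t : ℝ => m ! / (m - ν)! * ∏ x ∈ Icc (ν + 1) m, (t - x))
      (g := fun t : ℝ => ∏ x ∈ (range (m + 1)).erase k, (t + x)) _
      (mul_ne_zero hC (prod_ne_zero_iff.2 fun x hx => sub_ne_zero.2 (hnum x hx)))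
      (prod_erase_neg_add_ne_zero m k) (by fun_prop) (by fun_prop),
    logDeriv_const_mul _ _ hC, logDeriv_prod_sub_const _ _ hnum, logDeriv_prod_add_const _ _ hden,
    sum_Icc_neg_sub_natCast]
  simp_rw [neg_add_eq_sub]
  rw [sum_range_succ_erase_natCast_sub hk]
  simp only [inv_neg, sum_neg_distrib]
  ring

end RegularPart

theorem R0_cube_beta_coeff_general (Δ ν : ℕ) (hΔ : 1 < Δ)
    (R₀ : ℝ → ℝ)
    (hR : ∀ t : ℝ, R₀ t = ((ν * Δ).factorial : ℝ) / ((ν * Δ - ν).factorial : ℝ) *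
      (∏ κ ∈ Finset.Icc (ν + 1) (ν * Δ), (t - (κ : ℝ))) *
      (∏ κ ∈ Finset.range (ν * Δ + 1), (t + (κ : ℝ))⁻¹))
    (k : ℕ) (hk : k ≤ ν * Δ) :
    Tendsto (deriv fun t : ℝ => (R₀ t) ^ 3 * (t + (k : ℝ)) ^ 3)
      (nhdsWithin (-(k : ℝ)) {(-(k : ℝ))}ᶜ)
      (nhds (3 * ((-1 : ℝ) ^ (ν + ν * Δ + k) *
          ((ν * Δ).choose k : ℝ) ^ 3 * ((ν * Δ + k).choose (ν * Δ - ν) : ℝ) ^ 3) *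
        (-(∑ κ ∈ Finset.Icc (ν + k + 1) (ν * Δ + k), (κ : ℝ)⁻¹) -
          (∑ κ ∈ Finset.Icc 1 (ν * Δ - k), (κ : ℝ)⁻¹) +
          (∑ κ ∈ Finset.Icc 1 k, (κ : ℝ)⁻¹)))) := by
  have hν : ν ≤ ν * Δ := Nat.le_mul_of_pos_right ν (by omega)
  have hcube : (fun t : ℝ => R₀ t ^ 3 * (t + k) ^ 3) =ᶠ[𝓝[≠] (-(k : ℝ))]
      fun t => regularPart (ν * Δ) ν k t ^ 3 := by
    filter_upwards [self_mem_nhdsWithin] with t ht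
    rw [← mul_pow, hR, mul_add_eq_regularPart hk (fun h => ht (eq_neg_of_add_eq_zero_left h))]
  have hval := regularPart_neg hν hk
  have hne : regularPart (ν * Δ) ν k (-k) ≠ 0 := by
    rw [hval]
    have := Nat.choose_pos hk
    have := Nat.choose_pos (show ν * Δ - ν ≤ ν * Δ + k by omega)
    positivity
  have hanalytic := analyticAt_regularPart (ν * Δ) ν k
  convert tendsto_deriv_nhdsNE_of_eventuallyEq hcube (hanalytic.pow 3) using 2
  rw [deriv_fun_pow_eq_mul_logDeriv hanalytic.differentiableAt hne, hval,
    logDeriv_regularPart_neg hk, mul_pow, mul_pow, pow_right_comm _ _ 3]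
  norm_num

/-- The coefficient `β*_{ν,k}` of `(t+k)⁻²` in the partial fraction expansion of `R₀(t;ν)³`. -/
theorem R0_cube_beta_coeff (Δ ν : ℕ) (hΔ : 1 < Δ) (hν : 1 ≤ ν)
    (R₀ : ℝ → ℝ)
    (hR : ∀ t : ℝ, R₀ t = ((ν * Δ).factorial : ℝ) / ((ν * Δ - ν).factorial : ℝ) *
      (∏ κ ∈ Finset.Icc (ν + 1) (ν * Δ), (t - (κ : ℝ))) *
      (∏ κ ∈ Finset.range (ν * Δ + 1), (t + (κ : ℝ))⁻¹))
    (k : ℕ) (hk : k ≤ ν * Δ) :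
    Tendsto (deriv fun t : ℝ => (R₀ t) ^ 3 * (t + (k : ℝ)) ^ 3)
      (nhdsWithin (-(k : ℝ)) {(-(k : ℝ))}ᶜ)
      (nhds (3 * ((-1 : ℝ) ^ (ν + ν * Δ + k) *
          ((ν * Δ).choose k : ℝ) ^ 3 * ((ν * Δ + k).choose (ν * Δ - ν) : ℝ) ^ 3) *
        (-(∑ κ ∈ Finset.Icc (ν + k + 1) (ν * Δ + k), (κ : ℝ)⁻¹) -
          (∑ κ ∈ Finset.Icc 1 (ν * Δ - k), (κ : ℝ)⁻¹) +
          (∑ κ ∈ Finset.Icc 1 k, (κ : ℝ)⁻¹)))) :=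
  R0_cube_beta_coeff_general Δ ν hΔ R₀ hR k hk
end

section
/- Let $\Delta > 1$, $\nu \ge 1$ be integers, $d_1 = \Delta - 1$, and let $R_0(t;\nu) = \frac{(\nu\Delta)!}{(\nu\Delta-\nu)!}\prod_{\kappa=\nu+1}^{\nu\Delta}(t-\kappa)\prod_{\kappa=0}^{\nu\Delta}(t+\kappa)^{-1}$. For real $z > 1$ define $f_2^*(z,\nu) = (-z)^{\nu}\sum_{t=\nu+1}^{\infty} z^{-t} R_0(t;\nu)^3$. Then the series converges absolutely and $f_2^*(z,\nu) = \alpha^*(z;\nu)\,\mathrm{Li}_3(1/z) + \beta^*(z;\nu)\,\mathrm{Li}_2(1/z) - \gamma^*(z;\nu)\log(1-1/z) - \phi^*(z;\nu)$, where $\alpha^*(z;\nu) = (-z)^{\nu}\sum_{k=0}^{\nu\Delta}\alpha^*_{\nu,k}z^k$, $\beta^*(z;\nu) = (-z)^{\nu}\sum_{k=0}^{\nu\Delta}\beta^*_{\nu,k}z^k$, $\gamma^*(z;\nu) = (-z)^{\nu}\sum_{k=0}^{\nu\Delta}\gamma^*_{\nu,k}z^k$, and $\phi^*(z;\nu) =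 (-z)^{\nu}\sum_{k=0}^{\nu\Delta}z^k\sum_{t=1}^{k+\nu}z^{-t}\big(\alpha^*_{\nu,k}t^{-3}+\beta^*_{\nu,k}t^{-2}+\gamma^*_{\nu,k}t^{-1}\big)$. -/
/-! Substituting the partial-fraction expansion of `R₀³`, the pole `(t + k)⁻ᵐ` contributes
`zᵏ ∑_{t > k + ν} z⁻ᵗ t⁻ᵐ`, which is `zᵏ` times the polylogarithm `Liₘ(1/z)` minus its first
`k + ν` terms; for `m = 1` the polylogarithm is `-log (1 - 1/z)`. -/

/-- The polylogarithm `Li n w = ∑_{t ≥ 1} wᵗ t⁻ⁿ`. -/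
noncomputable def Li (n : ℕ) (w : ℝ) : ℝ := ∑' t : ℕ, w ^ (t + 1) / ((t + 1 : ℕ) : ℝ) ^ n

open Finset

lemma summable_Li {w : ℝ} (hw : |w| < 1) (m : ℕ) :
    Summable fun t : ℕ => w ^ (t + 1) / ((t + 1 : ℕ) : ℝ) ^ m := by
  refine Summable.of_norm_bounded (summable_geometric_of_lt_one (abs_nonneg w) hw) fun t => ?_
  have hden : (1 : ℝ) ≤ ((t + 1 : ℕ) : ℝ) ^ m := one_le_pow₀ (by simp)
  rw [norm_div, norm_pow, norm_pow, Real.norm_eq_abs, Real.norm_natCast]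
  calc |w| ^ (t + 1) / ((t + 1 : ℕ) : ℝ) ^ m ≤ |w| ^ (t + 1) := div_le_self (by positivity) hden
    _ ≤ |w| ^ t := pow_le_pow_of_le_one (abs_nonneg w) hw.le (Nat.le_succ t)

lemma hasSum_Li_tail {w : ℝ} (hw : |w| < 1) (m j : ℕ) :
    HasSum (fun n : ℕ => w ^ (j + 1 + n) / ((j + 1 + n : ℕ) : ℝ) ^ m)
      (Li m w - ∑ t ∈ Icc 1 j, w ^ t / (t : ℝ) ^ m) := by
  have h := (hasSum_nat_add_iff' j).mpr (summable_Li hw m).hasSum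
  have hIcc : ∑ i ∈ range j, w ^ (i + 1) / ((i + 1 : ℕ) : ℝ) ^ m
      = ∑ t ∈ Icc 1 j, w ^ t / (t : ℝ) ^ m := by
    rw [range_eq_Ico, sum_Ico_add' (fun t : ℕ => w ^ t / (t : ℝ) ^ m)]
    rfl
  have hshift : (fun n : ℕ => w ^ (j + 1 + n) / ((j + 1 + n : ℕ) : ℝ) ^ m)
      = fun n => w ^ (n + j + 1) / ((n + j + 1 : ℕ) : ℝ) ^ m :=
    funext fun n => by rw [show j + 1 + n = n + j + 1 by ring]
  rw [← hIcc, hshift]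
  exact h

lemma Li_one_eq_neg_log {w : ℝ} (hw : |w| < 1) : Li 1 w = -Real.log (1 - w) := by
  rw [Li, ← (Real.hasSum_pow_div_log_of_abs_lt_one hw).tsum_eq]
  push_cast
  simp only [pow_one]

lemma abs_one_div_lt_one {z : ℝ} (hz : 1 < |z|) : |1 / z| < 1 := by
  rw [abs_div, abs_one]
  exact (div_lt_one (by linarith)).mpr hz

lemma hasSum_zpow_mul_inv_add_pow {z : ℝ} (hz : 1 < |z|) (m j k : ℕ) :
    HasSum (fun n : ℕ => z ^ (-((j + 1 + n : ℕ) : ℤ)) * ((((j + 1 + n : ℕ) : ℝ) + k) ^ m)⁻¹)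
      (z ^ k * (Li m (1 / z) - ∑ t ∈ Icc 1 (k + j), z ^ (-(t : ℤ)) * ((t : ℝ) ^ m)⁻¹)) := by
  have hz0 : z ≠ 0 := abs_pos.mp (by linarith)
  have hterm : ∀ n : ℕ, z ^ (-((j + 1 + n : ℕ) : ℤ)) * ((((j + 1 + n : ℕ) : ℝ) + k) ^ m)⁻¹
      = z ^ k * ((1 / z) ^ (k + j + 1 + n) / ((k + j + 1 + n : ℕ) : ℝ) ^ m) := by
    intro n
    rw [zpow_neg, zpow_natCast, one_div, inv_pow, show k + j + 1 + n = k + (j + 1 + n) by ring,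
      pow_add z k, mul_inv, mul_div_assoc, ← mul_assoc, mul_inv_cancel₀ (pow_ne_zero k hz0),
      one_mul, div_eq_mul_inv]
    push_cast
    ring
  have hpartial : ∑ t ∈ Icc 1 (k + j), (1 / z) ^ t / (t : ℝ) ^ m
      = ∑ t ∈ Icc 1 (k + j), z ^ (-(t : ℤ)) * ((t : ℝ) ^ m)⁻¹ :=
    sum_congr rfl fun t _ => by rw [zpow_neg, zpow_natCast, one_div, inv_pow, div_eq_mul_inv]
  rw [funext hterm, ← hpartial]
  exact (hasSum_Li_tail (abs_one_div_lt_one hz) m (k + j)).mul_left (z ^ k)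

theorem hasSum_zpow_mul_partialFraction {z : ℝ} (hz : 1 < |z|) (j : ℕ) (s : Finset ℕ)
    (a b c : ℕ → ℝ) :
    HasSum (fun n : ℕ => z ^ (-((j + 1 + n : ℕ) : ℤ)) * ∑ k ∈ s,
        (a k * ((((j + 1 + n : ℕ) : ℝ) + k) ^ 3)⁻¹ + b k * ((((j + 1 + n : ℕ) : ℝ) + k) ^ 2)⁻¹ +
          c k * (((j + 1 + n : ℕ) : ℝ) + k)⁻¹))
      ((∑ k ∈ s, a k * z ^ k) * Li 3 (1 / z) + (∑ k ∈ s, b k * z ^ k) * Li 2 (1 / z) -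
        (∑ k ∈ s, c k * z ^ k) * Real.log (1 - 1 / z) -
        ∑ k ∈ s, z ^ k * ∑ t ∈ Icc 1 (k + j), z ^ (-(t : ℤ)) *
          (a k * ((t : ℝ) ^ 3)⁻¹ + b k * ((t : ℝ) ^ 2)⁻¹ + c k * (t : ℝ)⁻¹)) := by
  have hpole := hasSum_zpow_mul_inv_add_pow hz
  have hk : ∀ k ∈ s, HasSum _ _ := fun k _ =>
    (((hpole 3 j k).mul_left (a k)).add ((hpole 2 j k).mul_left (b k))).add
      ((hpole 1 j k).mul_left (c k))
  convert hasSum_sum hk using 1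
  · funext n
    rw [mul_sum]
    refine sum_congr rfl fun k _ => ?_
    simp only [pow_one]
    ring
  · rw [← neg_neg (Real.log _), ← Li_one_eq_neg_log (abs_one_div_lt_one hz)]
    simp only [sum_mul, ← sum_add_distrib, ← sum_sub_distrib]
    refine sum_congr rfl fun k _ => ?_
    have hsplit : ∑ t ∈ Icc 1 (k + j), z ^ (-(t : ℤ)) *
          (a k * ((t : ℝ) ^ 3)⁻¹ + b k * ((t : ℝ) ^ 2)⁻¹ + c k * (t : ℝ)⁻¹)
        = a k * ∑ t ∈ Icc 1 (k + j), z ^ (-(t : ℤ)) * ((t : ℝ) ^ 3)⁻¹ +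
          b k * ∑ t ∈ Icc 1 (k + j), z ^ (-(t : ℤ)) * ((t : ℝ) ^ 2)⁻¹ +
          c k * ∑ t ∈ Icc 1 (k + j), z ^ (-(t : ℤ)) * ((t : ℝ) ^ 1)⁻¹ := by
      simp only [pow_one, mul_sum, ← sum_add_distrib]
      exact sum_congr rfl fun t _ => by ring
    rw [hsplit]
    ring

theorem f2_star_formula_general (Δ ν : ℕ)
    (R₀ : ℝ → ℝ)
    (α β γ : ℕ → ℝ)
    (hfrac : ∀ t : ℝ, (∀ k : ℕ, k ≤ ν * Δ → t ≠ -(k : ℝ)) →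
      (R₀ t) ^ 3 = ∑ k ∈ Finset.range (ν * Δ + 1),
        (α k * ((t + (k : ℝ)) ^ 3)⁻¹ + β k * ((t + (k : ℝ)) ^ 2)⁻¹ + γ k * (t + (k : ℝ))⁻¹))
    (z : ℝ) (hz : 1 < z)
    (f₂ : ℝ) (hf₂ : f₂ = (-z) ^ ν *
      ∑' n : ℕ, z ^ (-((ν + 1 + n : ℕ) : ℤ)) * (R₀ ((ν + 1 + n : ℕ) : ℝ)) ^ 3) :
    Summable (fun n : ℕ => |z ^ (-((ν + 1 + n : ℕ) : ℤ)) * (R₀ ((ν + 1 + n : ℕ) : ℝ)) ^ 3|) ∧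
    f₂ = ((-z) ^ ν * ∑ k ∈ Finset.range (ν * Δ + 1), α k * z ^ k) * Li 3 (1 / z) +
        ((-z) ^ ν * ∑ k ∈ Finset.range (ν * Δ + 1), β k * z ^ k) * Li 2 (1 / z) -
        ((-z) ^ ν * ∑ k ∈ Finset.range (ν * Δ + 1), γ k * z ^ k) * Real.log (1 - 1 / z) -
        (-z) ^ ν * ∑ k ∈ Finset.range (ν * Δ + 1), z ^ k *
          ∑ t ∈ Finset.Icc 1 (k + ν), z ^ (-(t : ℤ)) *
            (α k * ((t : ℝ) ^ 3)⁻¹ + β k * ((t : ℝ) ^ 2)⁻¹ + γ k * ((t : ℝ))⁻¹) := by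
  have hS := hasSum_zpow_mul_partialFraction (hz.trans_le (le_abs_self z)) ν
    (range (ν * Δ + 1)) α β γ
  have hR₀_cube : ∀ n : ℕ, (R₀ ((ν + 1 + n : ℕ) : ℝ)) ^ 3 = _ := fun n =>
    hfrac _ fun k _ h => by
      have : (0 : ℝ) < ((ν + 1 + n : ℕ) : ℝ) + k := by positivity
      linarith
  simp only [← hR₀_cube] at hS
  refine ⟨hS.summable.abs, ?_⟩
  rw [hf₂, hS.tsum_eq]
  ring

/-- `f₂*(z,ν) = α* Li₃(1/z) + β* Li₂(1/z) - γ* log(1 - 1/z) - φ*`, and the defining series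
converges absolutely. -/
theorem f2_star_formula (Δ ν : ℕ) (hΔ : 1 < Δ) (hν : 1 ≤ ν)
    (R₀ : ℝ → ℝ)
    (hR : ∀ t : ℝ, R₀ t = ((ν * Δ).factorial : ℝ) / ((ν * Δ - ν).factorial : ℝ) *
      (∏ κ ∈ Finset.Icc (ν + 1) (ν * Δ), (t - (κ : ℝ))) *
      (∏ κ ∈ Finset.range (ν * Δ + 1), (t + (κ : ℝ))⁻¹))
    (α β γ : ℕ → ℝ)
    (hα : ∀ k, α k = (-1 : ℝ) ^ (ν + ν * Δ + k) *
      ((ν * Δ).choose k : ℝ) ^ 3 * ((ν * Δ + k).choose (ν * Δ - ν) : ℝ) ^ 3)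
    (hfrac : ∀ t : ℝ, (∀ k : ℕ, k ≤ ν * Δ → t ≠ -(k : ℝ)) →
      (R₀ t) ^ 3 = ∑ k ∈ Finset.range (ν * Δ + 1),
        (α k * ((t + (k : ℝ)) ^ 3)⁻¹ + β k * ((t + (k : ℝ)) ^ 2)⁻¹ + γ k * (t + (k : ℝ))⁻¹))
    (z : ℝ) (hz : 1 < z)
    (f₂ : ℝ) (hf₂ : f₂ = (-z) ^ ν *
      ∑' n : ℕ, z ^ (-((ν + 1 + n : ℕ) : ℤ)) * (R₀ ((ν + 1 + n : ℕ) : ℝ)) ^ 3) :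
    Summable (fun n : ℕ => |z ^ (-((ν + 1 + n : ℕ) : ℤ)) * (R₀ ((ν + 1 + n : ℕ) : ℝ)) ^ 3|) ∧
    f₂ = ((-z) ^ ν * ∑ k ∈ Finset.range (ν * Δ + 1), α k * z ^ k) * Li 3 (1 / z) +
        ((-z) ^ ν * ∑ k ∈ Finset.range (ν * Δ + 1), β k * z ^ k) * Li 2 (1 / z) -
        ((-z) ^ ν * ∑ k ∈ Finset.range (ν * Δ + 1), γ k * z ^ k) * Real.log (1 - 1 / z) -
        (-z) ^ ν * ∑ k ∈ Finset.range (ν * Δ + 1), z ^ k *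
          ∑ t ∈ Finset.Icc 1 (k + ν), z ^ (-(t : ℤ)) *
            (α k * ((t : ℝ) ^ 3)⁻¹ + β k * ((t : ℝ) ^ 2)⁻¹ + γ k * ((t : ℝ))⁻¹) :=
  f2_star_formula_general Δ ν R₀ α β γ hfrac z hz f₂ hf₂
end

section
/- Let $\Delta > 1$, $\nu \ge 1$ be integers and $R_0(t;\nu)$ as above with partial fraction coefficients $\alpha^*_{\nu,k}, \beta^*_{\nu,k}, \gamma^*_{\nu,k}$. For real $z > 1$ define $f_4^*(z,\nu) = -(-z)^{\nu}\sum_{t=\nu+1}^{\infty} z^{-t}\,\frac{d}{dt}R_0(t;\nu)^3$. Then $f_4^*(z,\nu) = 3\alpha^*(z;\nu)\,\mathrm{Li}_4(1/z) + 2\beta^*(z;\nu)\,\mathrm{Li}_3(1/z) + \gamma^*(z;\nu)\,\mathrm{Li}_2(1/z) - \psi^*(z;\nu)$, where $\alpha^*(z;\nu),\beta^*(z;\nu),\gamma^*(z;\nu)$ are as in the decomposition $R_0^3 = \sum_k \alpha^*_{\nu,k}(t+k)^{-3}+\beta^*_{\nu,k}(t+k)^{-2}+\gamma^*_{\nu,k}(t+k)^{-1}$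 multiplied by $(-z)^\nu z^k$ and summed, and $\psi^*(z;\nu) = (-z)^{\nu}\sum_{k=0}^{\nu\Delta}z^k\sum_{t=1}^{k+\nu}z^{-t}\big(3\alpha^*_{\nu,k}t^{-4}+2\beta^*_{\nu,k}t^{-3}+\gamma^*_{\nu,k}t^{-2}\big)$. -/
open Finset

lemma summable_Li_series {w : ℝ} (hw₀ : 0 ≤ w) (hw₁ : w < 1) (m : ℕ) :
    Summable (fun t : ℕ => w ^ (t + 1) / ((t + 1 : ℕ) : ℝ) ^ m) := by
  refine Summable.of_nonneg_of_le (fun t => by positivity) (fun t => ?_)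
    ((summable_geometric_of_lt_one hw₀ hw₁).mul_left w)
  rw [← pow_succ']
  exact div_le_self (by positivity) (one_le_pow₀ (by simp))

lemma hasSum_zpow_mul_inv_pow_add {z : ℝ} (hz : 1 < z) (c k m : ℕ) :
    HasSum (fun n : ℕ => z ^ (-((c + 1 + n : ℕ) : ℤ)) * ((((c + 1 + n : ℕ) : ℝ) + k) ^ m)⁻¹)
      (z ^ k * (Li m (1 / z) - ∑ t ∈ Icc 1 (k + c), z ^ (-(t : ℤ)) * ((t : ℝ) ^ m)⁻¹)) := by
  have hz₀ : 0 < z := zero_lt_one.trans hz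
  have hLi := (summable_Li_series (inv_pos.2 hz₀).le (inv_lt_one_of_one_lt₀ hz) m).hasSum
  rw [← hasSum_nat_add_iff' (k + c)] at hLi
  have hpow (t : ℕ) : z ^ (-(t : ℤ)) = z⁻¹ ^ t := by rw [zpow_neg, zpow_natCast, inv_pow]
  have hterm (n : ℕ) : z ^ (-((c + 1 + n : ℕ) : ℤ)) * ((((c + 1 + n : ℕ) : ℝ) + k) ^ m)⁻¹ =
      z ^ k * (z⁻¹ ^ (n + (k + c) + 1) / ((n + (k + c) + 1 : ℕ) : ℝ) ^ m) := by
    have hzk : z ^ k * z⁻¹ ^ k = 1 := by rw [← mul_pow, mul_inv_cancel₀ hz₀.ne', one_pow]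
    rw [hpow, show n + (k + c) + 1 = (c + 1 + n) + k by omega, pow_add, div_eq_mul_inv]
    push_cast
    linear_combination (-(z⁻¹ ^ (c + 1 + n) * (((c : ℝ) + 1 + n + k) ^ m)⁻¹)) * hzk
  have hhead : ∑ t ∈ Icc 1 (k + c), z ^ (-(t : ℤ)) * ((t : ℝ) ^ m)⁻¹ =
      ∑ i ∈ range (k + c), z⁻¹ ^ (i + 1) / ((i + 1 : ℕ) : ℝ) ^ m := by
    rw [range_eq_Ico, sum_Ico_add' (fun i : ℕ => z⁻¹ ^ i / ((i : ℕ) : ℝ) ^ m) 0 (k + c) 1]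
    simp only [hpow, div_eq_mul_inv]
    rfl
  simp only [hterm, hhead, one_div]
  exact hLi.mul_left _

lemma hasSum_partialFraction_deriv_term {z : ℝ} (hz : 1 < z) (c k : ℕ) (a b g : ℝ) :
    HasSum (fun n : ℕ => z ^ (-((c + 1 + n : ℕ) : ℤ)) *
        (3 * a * ((((c + 1 + n : ℕ) : ℝ) + k) ^ 4)⁻¹ + 2 * b * ((((c + 1 + n : ℕ) : ℝ) + k) ^ 3)⁻¹
          + g * ((((c + 1 + n : ℕ) : ℝ) + k) ^ 2)⁻¹))
      (3 * (a * z ^ k) * Li 4 (1 / z) + 2 * (b * z ^ k) * Li 3 (1 / z) + g * z ^ k * Li 2 (1 / z) -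
        z ^ k * ∑ t ∈ Icc 1 (k + c), z ^ (-(t : ℤ)) *
          (3 * a * ((t : ℝ) ^ 4)⁻¹ + 2 * b * ((t : ℝ) ^ 3)⁻¹ + g * ((t : ℝ) ^ 2)⁻¹)) := by
  have h := (((hasSum_zpow_mul_inv_pow_add hz c k 4).mul_left (3 * a)).add
    ((hasSum_zpow_mul_inv_pow_add hz c k 3).mul_left (2 * b))).add
    ((hasSum_zpow_mul_inv_pow_add hz c k 2).mul_left g)
  have hval : 3 * a * (z ^ k * (Li 4 (1 / z) - ∑ t ∈ Icc 1 (k + c), z ^ (-(t : ℤ)) * ((t : ℝ) ^ 4)⁻¹)) +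
        2 * b * (z ^ k * (Li 3 (1 / z) - ∑ t ∈ Icc 1 (k + c), z ^ (-(t : ℤ)) * ((t : ℝ) ^ 3)⁻¹)) +
        g * (z ^ k * (Li 2 (1 / z) - ∑ t ∈ Icc 1 (k + c), z ^ (-(t : ℤ)) * ((t : ℝ) ^ 2)⁻¹)) =
      3 * (a * z ^ k) * Li 4 (1 / z) + 2 * (b * z ^ k) * Li 3 (1 / z) + g * z ^ k * Li 2 (1 / z) -
        z ^ k * ∑ t ∈ Icc 1 (k + c), z ^ (-(t : ℤ)) *
          (3 * a * ((t : ℝ) ^ 4)⁻¹ + 2 * b * ((t : ℝ) ^ 3)⁻¹ + g * ((t : ℝ) ^ 2)⁻¹) := by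
    simp only [mul_add, mul_sub, mul_sum, sum_add_distrib]
    ring_nf
  exact hval ▸ h.congr_fun fun n => by ring

lemma hasDerivAt_inv_add_pow (c : ℝ) (m : ℕ) {t : ℝ} (h : t + c ≠ 0) :
    HasDerivAt (fun s : ℝ => ((s + c) ^ (m + 1))⁻¹) (-((m : ℝ) + 1) * ((t + c) ^ (m + 2))⁻¹) t := by
  refine ((((hasDerivAt_id t).add_const c).pow (m + 1)).inv (pow_ne_zero _ h)).congr_deriv ?_
  simp only [Pi.pow_apply, id, Nat.add_sub_cancel]
  push_cast
  field_simp
  ring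

lemma hasDerivAt_partialFraction (N : ℕ) (α β γ : ℕ → ℝ) {t : ℝ} (ht : 0 < t) :
    HasDerivAt (fun s : ℝ => ∑ k ∈ range (N + 1),
        (α k * ((s + k) ^ 3)⁻¹ + β k * ((s + k) ^ 2)⁻¹ + γ k * (s + k)⁻¹))
      (-∑ k ∈ range (N + 1),
        (3 * α k * ((t + k) ^ 4)⁻¹ + 2 * β k * ((t + k) ^ 3)⁻¹ + γ k * ((t + k) ^ 2)⁻¹)) t := by
  rw [← sum_neg_distrib]
  refine HasDerivAt.fun_sum fun k _ => ?_
  have hk : t + k ≠ 0 := by positivity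
  convert (((hasDerivAt_inv_add_pow k 2 hk).const_mul (α k)).add
    ((hasDerivAt_inv_add_pow k 1 hk).const_mul (β k))).add
    ((hasDerivAt_inv_add_pow k 0 hk).const_mul (γ k)) using 1
  · funext s
    simp only [Pi.add_apply]
    norm_num
  · norm_num
    ring

lemma deriv_eq_of_partialFraction {f : ℝ → ℝ} (N : ℕ) (α β γ : ℕ → ℝ)
    (hf : ∀ t : ℝ, (∀ k : ℕ, k ≤ N → t ≠ -(k : ℝ)) →
      f t = ∑ k ∈ range (N + 1), (α k * ((t + k) ^ 3)⁻¹ + β k * ((t + k) ^ 2)⁻¹ + γ k * (t + k)⁻¹))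
    {t : ℝ} (ht : 0 < t) :
    deriv f t = -∑ k ∈ range (N + 1),
        (3 * α k * ((t + k) ^ 4)⁻¹ + 2 * β k * ((t + k) ^ 3)⁻¹ + γ k * ((t + k) ^ 2)⁻¹) := by
  have hfg : f =ᶠ[nhds t] fun s => ∑ k ∈ range (N + 1),
      (α k * ((s + k) ^ 3)⁻¹ + β k * ((s + k) ^ 2)⁻¹ + γ k * (s + k)⁻¹) := by
    filter_upwards [isOpen_Ioi.mem_nhds ht] with s (hs : 0 < s)
    exact hf s fun k _ hsk => by linarith [hsk ▸ hs, (k.cast_nonneg : (0 : ℝ) ≤ k)]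
  rw [hfg.deriv_eq, (hasDerivAt_partialFraction N α β γ ht).deriv]

theorem f4_star_formula_general (Δ ν : ℕ)
    (R₀ : ℝ → ℝ)
    (α β γ : ℕ → ℝ)
    (hfrac : ∀ t : ℝ, (∀ k : ℕ, k ≤ ν * Δ → t ≠ -(k : ℝ)) →
      (R₀ t) ^ 3 = ∑ k ∈ Finset.range (ν * Δ + 1),
        (α k * ((t + (k : ℝ)) ^ 3)⁻¹ + β k * ((t + (k : ℝ)) ^ 2)⁻¹ + γ k * (t + (k : ℝ))⁻¹))
    (z : ℝ) (hz : 1 < z)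
    (f₄ : ℝ) (hf₄ : f₄ = -((-z) ^ ν *
      ∑' n : ℕ, z ^ (-((ν + 1 + n : ℕ) : ℤ)) *
        deriv (fun s : ℝ => (R₀ s) ^ 3) ((ν + 1 + n : ℕ) : ℝ))) :
    f₄ = 3 * ((-z) ^ ν * ∑ k ∈ Finset.range (ν * Δ + 1), α k * z ^ k) * Li 4 (1 / z) +
        2 * ((-z) ^ ν * ∑ k ∈ Finset.range (ν * Δ + 1), β k * z ^ k) * Li 3 (1 / z) +
        ((-z) ^ ν * ∑ k ∈ Finset.range (ν * Δ + 1), γ k * z ^ k) * Li 2 (1 / z) -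
        (-z) ^ ν * ∑ k ∈ Finset.range (ν * Δ + 1), z ^ k *
          ∑ t ∈ Finset.Icc 1 (k + ν), z ^ (-(t : ℤ)) *
            (3 * α k * ((t : ℝ) ^ 4)⁻¹ + 2 * β k * ((t : ℝ) ^ 3)⁻¹ + γ k * ((t : ℝ) ^ 2)⁻¹) := by
  have hderiv (n : ℕ) := deriv_eq_of_partialFraction (ν * Δ) α β γ hfrac
    (show (0 : ℝ) < ((ν + 1 + n : ℕ) : ℝ) by positivity)
  have hsum := hasSum_sum fun k (_ : k ∈ range (ν * Δ + 1)) =>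
    hasSum_partialFraction_deriv_term hz ν k (α k) (β k) (γ k)
  have htsum : ∑' n : ℕ, z ^ (-((ν + 1 + n : ℕ) : ℤ)) *
      deriv (fun s : ℝ => (R₀ s) ^ 3) ((ν + 1 + n : ℕ) : ℝ) = -∑ k ∈ range (ν * Δ + 1),
        (3 * (α k * z ^ k) * Li 4 (1 / z) + 2 * (β k * z ^ k) * Li 3 (1 / z) +
          γ k * z ^ k * Li 2 (1 / z) - z ^ k * ∑ t ∈ Icc 1 (k + ν), z ^ (-(t : ℤ)) *
            (3 * α k * ((t : ℝ) ^ 4)⁻¹ + 2 * β k * ((t : ℝ) ^ 3)⁻¹ + γ k * ((t : ℝ) ^ 2)⁻¹)) := by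
    refine (hsum.neg.congr_fun fun n => ?_).tsum_eq
    rw [hderiv, mul_neg, mul_sum]
  rw [hf₄, htsum, mul_neg, neg_neg]
  simp only [sum_sub_distrib, sum_add_distrib, ← sum_mul, ← mul_sum]
  ring

/-- `f₄*(z,ν) = 3α* Li₄(1/z) + 2β* Li₃(1/z) + γ* Li₂(1/z) - ψ*`. -/
theorem f4_star_formula (Δ ν : ℕ) (hΔ : 1 < Δ) (hν : 1 ≤ ν)
    (R₀ : ℝ → ℝ)
    (hR : ∀ t : ℝ, R₀ t = ((ν * Δ).factorial : ℝ) / ((ν * Δ - ν).factorial : ℝ) *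
      (∏ κ ∈ Finset.Icc (ν + 1) (ν * Δ), (t - (κ : ℝ))) *
      (∏ κ ∈ Finset.range (ν * Δ + 1), (t + (κ : ℝ))⁻¹))
    (α β γ : ℕ → ℝ)
    (hfrac : ∀ t : ℝ, (∀ k : ℕ, k ≤ ν * Δ → t ≠ -(k : ℝ)) →
      (R₀ t) ^ 3 = ∑ k ∈ Finset.range (ν * Δ + 1),
        (α k * ((t + (k : ℝ)) ^ 3)⁻¹ + β k * ((t + (k : ℝ)) ^ 2)⁻¹ + γ k * (t + (k : ℝ))⁻¹))
    (z : ℝ) (hz : 1 < z)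
    (f₄ : ℝ) (hf₄ : f₄ = -((-z) ^ ν *
      ∑' n : ℕ, z ^ (-((ν + 1 + n : ℕ) : ℤ)) *
        deriv (fun s : ℝ => (R₀ s) ^ 3) ((ν + 1 + n : ℕ) : ℝ))) :
    f₄ = 3 * ((-z) ^ ν * ∑ k ∈ Finset.range (ν * Δ + 1), α k * z ^ k) * Li 4 (1 / z) +
        2 * ((-z) ^ ν * ∑ k ∈ Finset.range (ν * Δ + 1), β k * z ^ k) * Li 3 (1 / z) +
        ((-z) ^ ν * ∑ k ∈ Finset.range (ν * Δ + 1), γ k * z ^ k) * Li 2 (1 / z) -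
        (-z) ^ ν * ∑ k ∈ Finset.range (ν * Δ + 1), z ^ k *
          ∑ t ∈ Finset.Icc 1 (k + ν), z ^ (-(t : ℤ)) *
            (3 * α k * ((t : ℝ) ^ 4)⁻¹ + 2 * β k * ((t : ℝ) ^ 3)⁻¹ + γ k * ((t : ℝ) ^ 2)⁻¹) :=
  f4_star_formula_general Δ ν R₀ α β γ hfrac z hz f₄ hf₄
end
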